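/- arXiv:1603.08402 — 3 statements merged into one kernel-verified Lean document; each statement's English description precedes it below -/
import Mathlib

section
/- Let β > 1 and let φ : ℕ → (0,∞) satisfy liminf_{n→∞} φ(n)/n > 1. If x ∈ [0,1) has an infinite β-expansion (ε_n(x) ≠ 0 for infinitely many n), then liminf_{n→∞} (n + ℓ_n(x))/φ(n) < 1. Consequently, the set {x ∈ [0,1) : limsup_{n→∞} (1/φ(n)) log_β(x − ω_n(x)) = −1} contains only points with finite β-expansion and is hence at most countable. -/
open Filter Real MeasureTheory Set

/-- The β-transformation T_β(x) = βx - ⌊βx⌋. -/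
noncomputable def bT (β x : ℝ) : ℝ := β * x - ⌊β * x⌋

/-- The k-th digit (0-based: `bDigit β x k = ε_{k+1}(x)`) of the β-expansion. -/
noncomputable def bDigit (β x : ℝ) (k : ℕ) : ℤ := ⌊β * ((bT β)^[k] x)⌋

/-- The n-th convergent ω_n(x) = Σ_{k=1}^n ε_k(x)/β^k. -/
noncomputable def bConv (β x : ℝ) (n : ℕ) : ℝ :=
  ∑ k ∈ Finset.range n, (bDigit β x k : ℝ) / β ^ (k + 1)

/-- ℓ_n(x): length of the longest run of zero digits just after the n-th digit. -/
noncomputable def ellRun (β x : ℝ) (n : ℕ) : ℕ :=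
  sSup {k : ℕ | ∀ j < k, bDigit β x (n + j) = 0}

/-- r_n(x): maximal length of a run of zeros within the first n digits. -/
noncomputable def runMax (β x : ℝ) (n : ℕ) : ℕ :=
  sSup {k : ℕ | ∃ i, i + k ≤ n ∧ ∀ j < k, bDigit β x (i + j) = 0}

/-! A point with infinitely many nonzero digits has, at each such digit `ε_{n+1}`, both
`ℓ_n = 0` and `x - ω_n ≥ β^{-(n+1)}`. Since `φ n ≥ c (n + 1)` eventually for some `c > 1`,
along these `n` the quotient `(n + ℓ_n)/φ n` stays below `1/c`, and
`log_β (x - ω_n)/φ n` stays above `-1/c`. Hence the set of the second claim consists of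
points with finite expansion, each of which is a finite sum `Σ ε_k β^{-k}`. -/

lemma exists_lt_one_eventually_add_one_le_mul {φ : ℕ → ℝ} (hφ : ∀ n, 0 < φ n)
    (h : 1 < liminf (fun n : ℕ => φ n / n) atTop) :
    ∃ c < 1, ∀ᶠ n : ℕ in atTop, (n : ℝ) + 1 ≤ c * φ n := by
  obtain ⟨a, ha1, hal⟩ := exists_between h
  have hev : ∀ᶠ n : ℕ in atTop, a < φ n / n :=
    eventually_lt_of_lt_liminf hal
      (isBoundedUnder_of ⟨0, fun n => div_nonneg (hφ n).le n.cast_nonneg⟩)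
  obtain ⟨b, hb1, hba⟩ := exists_between ha1
  obtain ⟨N, hN⟩ := exists_nat_ge (b / (a - b))
  refine ⟨b⁻¹, inv_lt_one_of_one_lt₀ hb1, ?_⟩
  filter_upwards [hev, eventually_ge_atTop (max N 1)] with n hn hnN
  have hn0 : (0 : ℝ) < n := by exact_mod_cast (le_max_right N 1).trans hnN
  have hbn : b ≤ (a - b) * n := by
    rw [div_le_iff₀ (sub_pos.2 hba)] at hN
    nlinarith [show (N : ℝ) ≤ n by exact_mod_cast (le_max_left N 1).trans hnN]
  rw [lt_div_iff₀ hn0] at hn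
  rw [inv_mul_eq_div, le_div_iff₀ (by linarith)]
  nlinarith

section Expansion

variable {β x : ℝ}

lemma iterate_bT_mem_Ico (hx : x ∈ Ico (0 : ℝ) 1) : ∀ n, (bT β)^[n] x ∈ Ico (0 : ℝ) 1
  | 0 => hx
  | n + 1 => by
    rw [Function.iterate_succ_apply']
    exact ⟨Int.fract_nonneg _, Int.fract_lt_one _⟩

lemma bConv_add_iterate_bT_div (hβ : β ≠ 0) (x : ℝ) (n : ℕ) :
    bConv β x n + (bT β)^[n] x / β ^ n = x := by
  induction n with
  | zero => simp [bConv]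
  | succ n ih =>
    rw [bConv, Finset.sum_range_succ, ← bConv, Function.iterate_succ_apply', bDigit, bT]
    calc _ = bConv β x n + (bT β)^[n] x / β ^ n := by field_simp; ring
      _ = x := ih

lemma sub_bConv_eq (hβ : β ≠ 0) (x : ℝ) (n : ℕ) :
    x - bConv β x n = (bT β)^[n] x / β ^ n := by
  linarith [bConv_add_iterate_bT_div hβ x n]

lemma sub_bConv_mem_Icc (hβ : 1 ≤ β) (hx : x ∈ Ico (0 : ℝ) 1) (n : ℕ) :
    x - bConv β x n ∈ Icc (0 : ℝ) 1 := by
  have hT := iterate_bT_mem_Ico (β := β) hx n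
  rw [sub_bConv_eq (zero_lt_one.trans_le hβ).ne' x n]
  exact ⟨div_nonneg hT.1 (pow_nonneg (zero_le_one.trans hβ) n), (div_le_self hT.1 (one_le_pow₀ hβ)).trans hT.2.le⟩

lemma inv_pow_succ_le_sub_bConv (hβ : 0 < β) (hx : x ∈ Ico (0 : ℝ) 1) {n : ℕ}
    (hn : bDigit β x n ≠ 0) : (β ^ (n + 1))⁻¹ ≤ x - bConv β x n := by
  have hT := iterate_bT_mem_Ico (β := β) hx n
  have hdigit : 1 ≤ bDigit β x n := by
    have : 0 ≤ bDigit β x n := Int.floor_nonneg.2 (mul_nonneg hβ.le hT.1)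
    omega
  have hβT : 1 ≤ β * (bT β)^[n] x := by exact_mod_cast Int.le_floor.1 hdigit
  rw [sub_bConv_eq hβ.ne' x n, pow_succ', mul_inv, ← div_eq_mul_inv]
  gcongr
  rwa [inv_le_iff_one_le_mul₀ hβ, mul_comm]

lemma ellRun_eq_zero_of_bDigit_ne_zero {n : ℕ} (hn : bDigit β x n ≠ 0) : ellRun β x n = 0 :=
  Nat.eq_zero_of_le_zero <| csSup_le' fun k hk =>
    Nat.le_zero.2 <| Nat.eq_zero_of_not_pos fun hk0 => hn (by simpa using hk 0 hk0)

lemma iterate_bT_succ_of_bDigit_eq_zero {n : ℕ} (hn : bDigit β x n = 0) :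
    (bT β)^[n + 1] x = β * (bT β)^[n] x := by
  rw [Function.iterate_succ_apply', bT, ← bDigit, hn, Int.cast_zero, sub_zero]

lemma iterate_bT_eq_zero_of_forall_ge_bDigit_eq_zero (hβ : 1 < β) (hx : x ∈ Ico (0 : ℝ) 1) {N : ℕ}
    (hN : ∀ n ≥ N, bDigit β x n = 0) : (bT β)^[N] x = 0 := by
  have hpow : ∀ m, (bT β)^[N + m] x = β ^ m * (bT β)^[N] x := fun m => by
    induction m with
    | zero => simp
    | succ m ih =>
      rw [← add_assoc, iterate_bT_succ_of_bDigit_eq_zero (hN _ (Nat.le_add_right N m)), ih]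
      ring
  have hT := iterate_bT_mem_Ico (β := β) hx N
  refine le_antisymm (le_of_forall_pos_le_add fun ε hε => ?_) hT.1
  obtain ⟨m, hm⟩ := pow_unbounded_of_one_lt ε⁻¹ hβ
  have hlt : β ^ m * (bT β)^[N] x < 1 := hpow m ▸ (iterate_bT_mem_Ico hx (N + m)).2
  rw [inv_lt_iff_one_lt_mul₀ hε] at hm
  nlinarith [hT.1]

end Expansion

lemma countable_setOf_bDigit_eventually_eq_zero {β : ℝ} (hβ : 1 < β) :
    {x ∈ Ico (0 : ℝ) 1 | ∃ N, ∀ n ≥ N, bDigit β x n = 0}.Countable := by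
  refine (countable_iUnion fun N : ℕ =>
    countable_range fun d : Fin N → ℤ => ∑ k : Fin N, (d k : ℝ) / β ^ (k.1 + 1)).mono ?_
  rintro x ⟨hx, N, hN⟩
  refine mem_iUnion.2 ⟨N, fun k => bDigit β x k, ?_⟩
  have hx' := bConv_add_iterate_bT_div (by positivity) x N
  rw [iterate_bT_eq_zero_of_forall_ge_bDigit_eq_zero hβ hx hN, zero_div, add_zero, bConv] at hx'
  show ∑ k : Fin N, (bDigit β x k : ℝ) / β ^ (k.1 + 1) = x
  rwa [Fin.sum_univ_eq_sum_range (fun k => (bDigit β x k : ℝ) / β ^ (k + 1))]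

section Frequent

variable {β x c : ℝ} {φ : ℕ → ℝ}

lemma liminf_add_ellRun_div_le (hφ : ∀ n, 0 < φ n)
    (hfreq : ∃ᶠ n : ℕ in atTop, bDigit β x n ≠ 0 ∧ (n : ℝ) + 1 ≤ c * φ n) :
    liminf (fun n : ℕ => ((n : ℝ) + ellRun β x n) / φ n) atTop ≤ c := by
  refine liminf_le_of_frequently_le (hfreq.mono fun n ⟨hn, hφn⟩ => ?_)
    (isBoundedUnder_of ⟨0, fun n => div_nonneg (by positivity) (hφ n).le⟩)
  rw [ellRun_eq_zero_of_bDigit_ne_zero hn, div_le_iff₀ (hφ n)]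
  push_cast
  linarith

lemma neg_le_limsup_logb_sub_bConv_div (hβ : 1 < β) (hx : x ∈ Ico (0 : ℝ) 1)
    (hφ : ∀ n, 0 < φ n)
    (hfreq : ∃ᶠ n : ℕ in atTop, bDigit β x n ≠ 0 ∧ (n : ℝ) + 1 ≤ c * φ n) :
    -c ≤ limsup (fun n : ℕ => logb β (x - bConv β x n) / φ n) atTop := by
  refine le_limsup_of_frequently_le (hfreq.mono fun n ⟨hn, hφn⟩ => ?_)
    (isBoundedUnder_of ⟨0, fun n => div_nonpos_of_nonpos_of_nonneg
      (logb_nonpos hβ (sub_bConv_mem_Icc hβ.le hx n).1 (sub_bConv_mem_Icc hβ.le hx n).2)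
      (hφ n).le⟩)
  have hlow := inv_pow_succ_le_sub_bConv (by positivity) hx hn
  have hlog : -((n : ℝ) + 1) ≤ logb β (x - bConv β x n) := by
    rw [le_logb_iff_rpow_le hβ ((inv_pos.2 (by positivity)).trans_le hlow), rpow_neg
      (by positivity)]
    exact_mod_cast hlow
  rw [le_div_iff₀ (hφ n)]
  linarith

end Frequent

theorem stmt8 (β : ℝ) (hβ : 1 < β) (φ : ℕ → ℝ) (hφ : ∀ n, 0 < φ n)
    (h : 1 < Filter.liminf (fun n : ℕ => φ n / n) Filter.atTop) :
    (∀ x ∈ Set.Ico (0:ℝ) 1, (∀ N : ℕ, ∃ n ≥ N, bDigit β x n ≠ 0) →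
      Filter.liminf (fun n : ℕ => ((n : ℝ) + ellRun β x n) / φ n) Filter.atTop < 1) ∧
    Set.Countable {x ∈ Set.Ico (0:ℝ) 1 |
      Filter.limsup (fun n : ℕ => Real.logb β (x - bConv β x n) / φ n) Filter.atTop = -1} := by
  obtain ⟨c, hc1, hφc⟩ := exists_lt_one_eventually_add_one_le_mul hφ h
  have hfreq : ∀ x, (∀ N : ℕ, ∃ n ≥ N, bDigit β x n ≠ 0) →
      ∃ᶠ n : ℕ in atTop, bDigit β x n ≠ 0 ∧ (n : ℝ) + 1 ≤ c * φ n := fun x hinf =>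
    (frequently_atTop.2 hinf).and_eventually hφc
  refine ⟨fun x _ hinf => (liminf_add_ellRun_div_le hφ (hfreq x hinf)).trans_lt hc1,
    (countable_setOf_bDigit_eventually_eq_zero hβ).mono ?_⟩
  rintro x ⟨hx, hlim⟩
  refine ⟨hx, by_contra fun hfin => ?_⟩
  push Not at hfin
  have := neg_le_limsup_logb_sub_bConv_div hβ hx hφ (hfreq x hfin)
  linarith
end

section
/- Let β > 1 and let φ : ℕ → [0,∞) be any nonnegative function. Then the Hausdorff dimension of E_φ = {x ∈ [0,1) : ℓ_n(x) ≥ φ(n) for infinitely many n} is at most 1/(1 + liminf_{n→∞} φ(n)/n), with the convention 1/∞ = 0. -/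
/-!
If `ℓ_n(x) ≥ c n`, the digits of `x` after the `n`-th vanish for `c n` steps, so `x` lies within
`β^{-(1+c)n}` to the right of its `n`-th convergent. There are at most `β^{n+1}/(β-1)`
convergents of order `n`: those of order `n+1` with a nonzero last digit carry pairwise disjoint
intervals of length `β^{-(n+1)}` in `[0,1)`. Covering the points with `ℓ_n(x) ≥ c n` for
infinitely many `n` by these intervals for `n ≥ N` gives `d`-dimensional sums bounded by the
tail of a geometric series of ratio `β^{1-(1+c)d}`, which vanishes for `d > 1/(1+c)`. Then let
`c` increase to `liminf φ(n)/n`.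
-/

open Filter Real MeasureTheory Set

open scoped ENNReal Topology

section Expansion

variable {β : ℝ}

lemma bT_mem_Ico (β x : ℝ) : bT β x ∈ Ico (0 : ℝ) 1 :=
  ⟨Int.fract_nonneg _, Int.fract_lt_one _⟩

lemma bT_iterate_mem_Ico {x : ℝ} (hx : x ∈ Ico (0 : ℝ) 1) :
    ∀ k, (bT β)^[k] x ∈ Ico (0 : ℝ) 1
  | 0 => hx
  | k + 1 => by rw [Function.iterate_succ_apply']; exact bT_mem_Ico β _

lemma bDigit_nonneg (hβ : 0 ≤ β) {x : ℝ} (hx : 0 ≤ x) (k : ℕ) : 0 ≤ bDigit β x k := by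
  refine Int.floor_nonneg.2 (mul_nonneg hβ ?_)
  cases k with
  | zero => exact hx
  | succ k => rw [Function.iterate_succ_apply']; exact (bT_mem_Ico β _).1

lemma bDigit_le_floor (hβ : 0 ≤ β) {x : ℝ} (hx : x ∈ Ico (0 : ℝ) 1) (k : ℕ) :
    bDigit β x k ≤ ⌊β⌋ := by
  have h := bT_iterate_mem_Ico (β := β) hx k
  exact Int.floor_le_floor (mul_le_of_le_one_right hβ h.2.le)

lemma bConv_succ (β x : ℝ) (n : ℕ) :
    bConv β x (n + 1) = bConv β x n + bDigit β x n / β ^ (n + 1) :=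
  Finset.sum_range_succ _ _

lemma bT_iterate_eq (hβ : β ≠ 0) (x : ℝ) (n : ℕ) :
    (bT β)^[n] x = β ^ n * (x - bConv β x n) := by
  induction n with
  | zero => simp [bConv]
  | succ n ih =>
    rw [Function.iterate_succ_apply', bT, ← bDigit, ih, bConv_succ]
    field_simp
    ring

lemma bDigit_eq_floor (hβ : β ≠ 0) (x : ℝ) (n : ℕ) :
    bDigit β x n = ⌊β ^ (n + 1) * (x - bConv β x n)⌋ := by
  rw [bDigit, bT_iterate_eq hβ, ← mul_assoc, ← pow_succ']

lemma bConv_nonneg (hβ : 0 ≤ β) {x : ℝ} (hx : 0 ≤ x) (n : ℕ) : 0 ≤ bConv β x n :=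
  Finset.sum_nonneg fun k _ => by have := bDigit_nonneg hβ hx k; positivity

lemma bConv_le_self (hβ : 0 < β) {x : ℝ} (hx : x ∈ Ico (0 : ℝ) 1) (n : ℕ) :
    bConv β x n ≤ x := by
  have h := (bT_iterate_mem_Ico (β := β) hx n).1
  rw [bT_iterate_eq hβ.ne'] at h
  nlinarith [pow_pos hβ n]

lemma lt_bConv_add_inv_pow (hβ : 0 < β) {x : ℝ} (hx : x ∈ Ico (0 : ℝ) 1) (n : ℕ) :
    x < bConv β x n + (β ^ n)⁻¹ := by
  have h := (bT_iterate_mem_Ico (β := β) hx n).2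
  rw [bT_iterate_eq hβ.ne', ← lt_div_iff₀' (pow_pos hβ n), one_div] at h
  linarith

/-- The cylinders of order `n` are intervals. -/
lemma bConv_eq_of_le_of_le (hβ : 0 < β) {x y : ℝ} (hx : 0 ≤ x) {n : ℕ}
    (hxy : bConv β x n ≤ y) (hyx : y ≤ x) : bConv β y n = bConv β x n := by
  induction n with
  | zero => simp [bConv]
  | succ n ih =>
    have hd := bDigit_nonneg hβ.le hx n
    have hp := pow_pos hβ (n + 1)
    have hsucc : bConv β x n ≤ bConv β x (n + 1) := by
      rw [bConv_succ]; exact le_add_of_nonneg_right (by positivity)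
    have hconv : bConv β y n = bConv β x n := ih (hsucc.trans hxy)
    have hdigit : bDigit β y n = bDigit β x n := by
      rw [bDigit_eq_floor hβ.ne' y, hconv, Int.floor_eq_iff]
      have hlo : (bDigit β x n : ℝ) ≤ β ^ (n + 1) * (y - bConv β x n) := by
        rw [bConv_succ, ← le_sub_iff_add_le', div_le_iff₀' hp] at hxy
        exact hxy
      have hhi := Int.lt_floor_add_one (β ^ (n + 1) * (x - bConv β x n))
      rw [← bDigit_eq_floor hβ.ne'] at hhi
      exact ⟨hlo, hhi.trans_le' (by gcongr)⟩
    rw [bConv_succ, bConv_succ, hconv, hdigit]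

lemma bConv_add_eq_of_bDigit_eq_zero (x : ℝ) {n m : ℕ}
    (h : ∀ j < m, bDigit β x (n + j) = 0) : bConv β x (n + m) = bConv β x n := by
  induction m with
  | zero => rfl
  | succ m ih =>
    rw [← add_assoc, bConv_succ, ih fun j hj => h j (by omega), h m m.lt_succ_self]
    simp

lemma bDigit_eq_zero_of_lt_ellRun {x : ℝ} {n j : ℕ} (hj : j < ellRun β x n) :
    bDigit β x (n + j) = 0 := by
  set S := {k : ℕ | ∀ j < k, bDigit β x (n + j) = 0}
  have hbdd : BddAbove S := by
    by_contra hunb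
    rw [ellRun, csSup_of_not_bddAbove hunb, csSup_empty] at hj
    exact Nat.not_lt_zero _ hj
  exact Nat.sSup_mem ⟨0, fun _ h => absurd h (Nat.not_lt_zero _)⟩ hbdd j hj

end Expansion

section Counting

variable {β : ℝ}

def bConvSet (β : ℝ) (n : ℕ) : Set ℝ := (bConv β · n) '' Ico 0 1

lemma bConvSet_finite (hβ : 0 ≤ β) (n : ℕ) : (bConvSet β n).Finite := by
  induction n with
  | zero =>
    refine (Set.finite_singleton 0).subset ?_
    rintro _ ⟨x, -, rfl⟩
    simp [bConv]
  | succ n ih =>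
    refine (ih.image2 (fun v (d : ℤ) => v + d / β ^ (n + 1)) (Set.finite_Icc 0 ⌊β⌋)).subset
      ?_
    rintro _ ⟨x, hx, rfl⟩
    exact ⟨_, ⟨x, hx, rfl⟩, bDigit β x n,
      ⟨bDigit_nonneg hβ hx.1 n, bDigit_le_floor hβ hx n⟩, (bConv_succ β x n).symm⟩

lemma ncard_mul_le_one_of_pairwiseDisjoint {s : Set ℝ} (hs : s.Finite) {δ : ℝ}
    (hdisj : s.PairwiseDisjoint fun w => Ico (w - δ) w)
    (hsub : ∀ w ∈ s, Ico (w - δ) w ⊆ Ico 0 1) : s.ncard * δ ≤ 1 := by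
  rw [← ENNReal.ofReal_le_one, ENNReal.ofReal_mul (Nat.cast_nonneg _), ENNReal.ofReal_natCast,
    Set.ncard_eq_toFinset_card s hs]
  calc (hs.toFinset.card : ℝ≥0∞) * ENNReal.ofReal δ
      = volume (⋃ w ∈ hs.toFinset, Ico (w - δ) w) := by
        rw [measure_biUnion_finset (by simpa using hdisj) fun _ _ => measurableSet_Ico]
        simp
    _ ≤ volume (Ico (0 : ℝ) 1) := measure_mono (by simpa using hsub)
    _ = 1 := by simp

lemma bConv_le_bConv_succ_sub (hβ : 0 < β) {x : ℝ} (hx : 0 ≤ x) {n : ℕ}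
    (hd : bDigit β x n ≠ 0) : bConv β x n ≤ bConv β x (n + 1) - (β ^ (n + 1))⁻¹ := by
  have hd1 : (1 : ℝ) ≤ bDigit β x n := mod_cast (bDigit_nonneg hβ.le hx n).lt_of_ne' hd
  rw [bConv_succ, add_sub_assoc, le_add_iff_nonneg_right, ← one_div, ← sub_div]
  exact div_nonneg (by linarith) (by positivity)

/-- The first `n + 1` digits of `y` are those of `x` with the last one lowered by one. -/
lemma bConv_succ_eq_sub_of_mem_Ico (hβ : 0 < β) {x y : ℝ} (hx : x ∈ Ico (0 : ℝ) 1) {n : ℕ}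
    (hd : bDigit β x n ≠ 0)
    (hy : y ∈ Ico (bConv β x (n + 1) - (β ^ (n + 1))⁻¹) (bConv β x (n + 1))) :
    bConv β y (n + 1) = bConv β x (n + 1) - (β ^ (n + 1))⁻¹ := by
  have hp := pow_pos hβ (n + 1)
  have hconv : bConv β y n = bConv β x n :=
    bConv_eq_of_le_of_le hβ hx.1 ((bConv_le_bConv_succ_sub hβ hx.1 hd).trans hy.1)
      (hy.2.le.trans (bConv_le_self hβ hx (n + 1)))
  rw [bConv_succ β x n] at hy
  have hdigit : bDigit β y n = bDigit β x n - 1 := by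
    rw [bDigit_eq_floor hβ.ne', hconv, Int.floor_eq_iff]
    obtain ⟨h1, h2⟩ := hy
    rw [← sub_nonneg] at h1
    rw [← sub_pos] at h2
    push_cast
    constructor <;> field_simp at h1 h2 ⊢ <;> linarith
  rw [bConv_succ, bConv_succ β x n, hconv, hdigit]
  push_cast
  ring

def bConvSetNonzeroLast (β : ℝ) (n : ℕ) : Set ℝ :=
  (bConv β · (n + 1)) '' {x ∈ Ico (0 : ℝ) 1 | bDigit β x n ≠ 0}

lemma bConvSetNonzeroLast_subset (β : ℝ) (n : ℕ) :
    bConvSetNonzeroLast β n ⊆ bConvSet β (n + 1) :=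
  Set.image_mono fun _ hx => hx.1

lemma bConvSet_succ_subset (β : ℝ) (n : ℕ) :
    bConvSet β (n + 1) ⊆ bConvSet β n ∪ bConvSetNonzeroLast β n := by
  rintro _ ⟨x, hx, rfl⟩
  by_cases hd : bDigit β x n = 0
  · exact .inl ⟨x, hx, by simp [bConv_succ, hd]⟩
  · exact .inr ⟨x, ⟨hx, hd⟩, rfl⟩

lemma ncard_bConvSetNonzeroLast_le (hβ : 0 < β) (n : ℕ) :
    ((bConvSetNonzeroLast β n).ncard : ℝ) ≤ β ^ (n + 1) := by
  rw [← one_mul (β ^ (n + 1)), ← mul_inv_le_iff₀ (by positivity)]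
  refine ncard_mul_le_one_of_pairwiseDisjoint
    ((bConvSet_finite hβ.le _).subset (bConvSetNonzeroLast_subset β n)) ?_ ?_
  · rintro _ ⟨x, hx, rfl⟩ _ ⟨x', hx', rfl⟩ hne
    refine Set.disjoint_left.2 fun y hy hy' => hne ?_
    have h := (bConv_succ_eq_sub_of_mem_Ico hβ hx.1 hx.2 hy).symm.trans
      (bConv_succ_eq_sub_of_mem_Ico hβ hx'.1 hx'.2 hy')
    simpa using h
  · rintro _ ⟨x, hx, rfl⟩ y hy
    have h₀ := (bConv_nonneg hβ.le hx.1.1 n).trans (bConv_le_bConv_succ_sub hβ hx.1.1 hx.2)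
    exact ⟨h₀.trans hy.1, hy.2.trans_le (bConv_le_self hβ hx.1 _) |>.trans hx.1.2⟩

lemma ncard_bConvSet_succ_le (hβ : 0 < β) (n : ℕ) :
    ((bConvSet β (n + 1)).ncard : ℝ) ≤ (bConvSet β n).ncard + β ^ (n + 1) := by
  have hcard := (Set.ncard_le_ncard (bConvSet_succ_subset β n)
    ((bConvSet_finite hβ.le n).union ((bConvSet_finite hβ.le _).subset
      (bConvSetNonzeroLast_subset β n)))).trans (Set.ncard_union_le _ _)
  calc ((bConvSet β (n + 1)).ncard : ℝ)
      ≤ (bConvSet β n).ncard + (bConvSetNonzeroLast β n).ncard := mod_cast hcard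
    _ ≤ _ := by gcongr; exact ncard_bConvSetNonzeroLast_le hβ n

lemma ncard_bConvSet_le (hβ : 1 < β) (n : ℕ) :
    ((bConvSet β n).ncard : ℝ) ≤ β ^ (n + 1) / (β - 1) := by
  have hβ1 : 0 < β - 1 := by linarith
  induction n with
  | zero =>
    have h0 : bConvSet β 0 = {0} := by
      refine Set.eq_singleton_iff_unique_mem.2 ⟨⟨0, by simp, by simp [bConv]⟩, ?_⟩
      rintro _ ⟨x, -, rfl⟩
      simp [bConv]
    rw [h0, Set.ncard_singleton, le_div_iff₀ hβ1]
    simp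
  | succ n ih =>
    calc ((bConvSet β (n + 1)).ncard : ℝ) ≤ (bConvSet β n).ncard + β ^ (n + 1) :=
          ncard_bConvSet_succ_le (by linarith) n
      _ ≤ β ^ (n + 1) / (β - 1) + β ^ (n + 1) := by gcongr
      _ = β ^ (n + 1 + 1) / (β - 1) := by field_simp; ring

end Counting

/-- A Hausdorff–Cantelli lemma: for each `N`, the families `t n` with `n ≥ N` cover `s`. -/
theorem hausdorffMeasure_eq_zero_of_frequently_mem {X : Type*} [EMetricSpace X]
    [MeasurableSpace X] [BorelSpace X] {ι : ℕ → Type*} [∀ n, Fintype (ι n)] {s : Set X}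
    {d : ℝ} (hd : 0 ≤ d) (t : ∀ n, ι n → Set X) {r : ℕ → ℝ≥0∞} (hr : Antitone r)
    (hr₀ : Tendsto r atTop (𝓝 0)) (hdiam : ∀ n i, Metric.ediam (t n i) ≤ r n)
    (hsum : ∑' n, (Fintype.card (ι n) : ℝ≥0∞) * r n ^ d ≠ ∞)
    (hs : ∀ x ∈ s, ∃ᶠ n in atTop, ∃ i, x ∈ t n i) : μH[d] s = 0 := by
  have hcover : ∀ N, s ⊆ ⋃ i : (k : ℕ) × ι (k + N), t (i.1 + N) i.2 := fun N x hx => by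
    obtain ⟨n, ⟨i, hi⟩, hn⟩ := ((hs x hx).and_eventually (eventually_ge_atTop N)).exists
    obtain ⟨k, rfl⟩ := Nat.exists_eq_add_of_le' hn
    exact Set.mem_iUnion.2 ⟨⟨k, i⟩, hi⟩
  refine le_antisymm ?_ zero_le
  calc μH[d] s
      ≤ liminf (fun N => ∑' i : (k : ℕ) × ι (k + N), Metric.ediam (t (i.1 + N) i.2) ^ d)
          atTop :=
        Measure.hausdorffMeasure_le_liminf_tsum d s r hr₀ _
          (.of_forall fun N i => (hdiam _ _).trans (hr (Nat.le_add_left N i.1)))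
          (.of_forall hcover)
    _ ≤ liminf (fun N => ∑' k, (Fintype.card (ι (k + N)) : ℝ≥0∞) * r (k + N) ^ d)
          atTop := by
        refine liminf_le_liminf (.of_forall fun N => ?_)
        rw [ENNReal.tsum_sigma']
        refine ENNReal.tsum_le_tsum fun k => ?_
        rw [tsum_fintype]
        have := Finset.sum_le_card_nsmul Finset.univ (fun i => Metric.ediam (t (k + N) i) ^ d)
          (r (k + N) ^ d) fun i _ => ENNReal.rpow_le_rpow (hdiam _ _) hd
        rwa [nsmul_eq_mul, Finset.card_univ] at this
    _ = 0 := (ENNReal.tendsto_sum_nat_add _ hsum).liminf_eq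

section LongRuns

variable {β : ℝ}

def longRunSet (β c : ℝ) : Set ℝ :=
  {x ∈ Ico (0 : ℝ) 1 | ∃ᶠ n in atTop, c * n ≤ (ellRun β x n : ℝ)}

lemma mem_Icc_bConv_of_mul_le_ellRun (hβ : 1 < β) {x c : ℝ} (hx : x ∈ Ico (0 : ℝ) 1)
    {n : ℕ} (h : c * n ≤ ellRun β x n) :
    x ∈ Icc (bConv β x n) (bConv β x n + (β ^ (-(1 + c))) ^ n) := by
  have hβ0 : 0 < β := zero_lt_one.trans hβ
  refine ⟨bConv_le_self hβ0 hx n, ?_⟩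
  have hx' := lt_bConv_add_inv_pow hβ0 hx (n + ellRun β x n)
  rw [bConv_add_eq_of_bDigit_eq_zero x fun j hj => bDigit_eq_zero_of_lt_ellRun hj] at hx'
  refine hx'.le.trans ?_
  gcongr
  rw [← Real.rpow_mul_natCast hβ0.le, ← Real.rpow_natCast, ← Real.rpow_neg hβ0.le]
  exact Real.rpow_le_rpow_of_exponent_le hβ.le (by push_cast; linarith)

lemma hausdorffMeasure_longRunSet_eq_zero (hβ : 1 < β) {c d : ℝ} (hc : 0 ≤ c)
    (hd : 1 < (1 + c) * d) : μH[d] (longRunSet β c) = 0 := by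
  have hβ0 : 0 < β := zero_lt_one.trans hβ
  have hd0 : 0 < d := pos_of_mul_pos_right (one_pos.trans hd) (by linarith)
  set ρ := β ^ (-(1 + c))
  have hρ0 : 0 < ρ := Real.rpow_pos_of_pos hβ0 _
  have hρ1 : ρ < 1 := Real.rpow_lt_one_of_one_lt_of_neg hβ (by linarith)
  set q := β * ρ ^ d
  have hq1 : q < 1 := by
    simp only [q, ρ]
    rw [← Real.rpow_mul hβ0.le, ← Real.rpow_one_add' hβ0.le (by nlinarith)]
    exact Real.rpow_lt_one_of_one_lt_of_neg hβ (by nlinarith)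
  let V n := (bConvSet_finite hβ0.le n).toFinset
  have hterm : ∀ n, (Fintype.card (V n) : ℝ≥0∞) * (ENNReal.ofReal ρ ^ n) ^ d ≤
      ENNReal.ofReal (β / (β - 1)) * ENNReal.ofReal q ^ n := by
    intro n
    rw [Fintype.card_coe, ← Set.ncard_eq_toFinset_card _ (bConvSet_finite hβ0.le n),
      ← ENNReal.ofReal_pow hρ0.le, ENNReal.ofReal_rpow_of_nonneg (by positivity) hd0.le,
      ← ENNReal.ofReal_pow (by positivity),
      ← ENNReal.ofReal_natCast, ← ENNReal.ofReal_mul (by positivity),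
      ← ENNReal.ofReal_mul (by positivity)]
    refine ENNReal.ofReal_le_ofReal ?_
    calc ((bConvSet β n).ncard : ℝ) * (ρ ^ n) ^ d
        ≤ β ^ (n + 1) / (β - 1) * (ρ ^ n) ^ d := by gcongr; exact ncard_bConvSet_le hβ n
      _ = β / (β - 1) * q ^ n := by rw [← Real.rpow_pow_comm hρ0.le, mul_pow]; ring
  refine hausdorffMeasure_eq_zero_of_frequently_mem hd0.le
    (fun n (v : V n) => Icc (v : ℝ) (v + ρ ^ n)) (r := fun n => ENNReal.ofReal ρ ^ n)
    (fun _ _ h => pow_le_pow_of_le_one (by positivity) (ENNReal.ofReal_le_one.2 hρ1.le) h)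
    (ENNReal.tendsto_pow_atTop_nhds_zero_of_lt_one (ENNReal.ofReal_lt_one.2 hρ1))
    (fun n v => by simp [Real.ediam_Icc, ENNReal.ofReal_pow hρ0.le]) ?_ ?_
  · refine ne_top_of_le_ne_top ?_ (ENNReal.tsum_le_tsum hterm)
    rw [ENNReal.tsum_mul_left, ENNReal.tsum_geometric]
    exact ENNReal.mul_ne_top ENNReal.ofReal_ne_top
      (ENNReal.inv_ne_top.2 (tsub_pos_of_lt (ENNReal.ofReal_lt_one.2 hq1)).ne')
  · intro x hx
    refine hx.2.mono fun n hn =>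
      ⟨⟨bConv β x n, ?_⟩, mem_Icc_bConv_of_mul_le_ellRun hβ hx.1 hn⟩
    exact (Set.Finite.mem_toFinset _).2 ⟨x, hx.1, rfl⟩

lemma dimH_longRunSet_le (hβ : 1 < β) {c : ℝ} (hc : 0 ≤ c) :
    dimH (longRunSet β c) ≤ (1 + ENNReal.ofReal c)⁻¹ := by
  refine dimH_le fun d hd => le_of_not_gt fun hlt => ?_
  rw [← ENNReal.ofReal_one, ← ENNReal.ofReal_add zero_le_one hc,
    ← ENNReal.ofReal_inv_of_pos (by linarith), ← ENNReal.ofReal_coe_nnreal,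
    ENNReal.ofReal_lt_ofReal_iff'] at hlt
  have hd1 : 1 < (1 + c) * d := (inv_lt_iff_one_lt_mul₀' (by linarith)).1 hlt.1
  rw [hausdorffMeasure_longRunSet_eq_zero hβ hc hd1] at hd
  exact ENNReal.zero_ne_top hd

end LongRuns

lemma ENNReal.le_inv_one_add_of_forall_lt {D L : ℝ≥0∞} (h₀ : D ≤ 1)
    (h : ∀ c < L, D ≤ (1 + c)⁻¹) : D ≤ (1 + L)⁻¹ := by
  rw [ENNReal.le_inv_iff_le_inv]
  refine le_of_forall_lt_imp_le_of_dense fun y hy => ?_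
  rcases le_or_gt y 1 with hy1 | hy1
  · exact hy1.trans (ENNReal.one_le_inv.2 h₀)
  · obtain ⟨c, hyc, hcL⟩ :=
      exists_between (ENNReal.sub_lt_of_lt_add hy1.le (add_comm 1 L ▸ hy))
    calc y ≤ 1 + (y - 1) := le_add_tsub
      _ ≤ 1 + c := by gcongr
      _ ≤ D⁻¹ := ENNReal.le_inv_iff_le_inv.1 (h c hcL)

lemma eventually_toReal_mul_le_of_lt_liminf {φ : ℕ → ℝ} {c : ℝ≥0∞}
    (hc : c < liminf (fun n : ℕ => ENNReal.ofReal (φ n / n)) atTop) :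
    ∀ᶠ n : ℕ in atTop, c.toReal * n ≤ φ n := by
  filter_upwards [eventually_lt_of_lt_liminf hc, eventually_gt_atTop 0] with n hlt hn
  rw [ENNReal.lt_ofReal_iff_toReal_lt (ne_top_of_lt hc), lt_div_iff₀ (mod_cast hn)] at hlt
  exact hlt.le

theorem stmt10_general (β : ℝ) (hβ : 1 < β) (φ : ℕ → ℝ) :
    dimH {x ∈ Set.Ico (0:ℝ) 1 | ∃ᶠ n in Filter.atTop, φ n ≤ (ellRun β x n : ℝ)} ≤
      1 / (1 + Filter.liminf (fun n : ℕ => ENNReal.ofReal (φ n / n)) Filter.atTop) := by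
  rw [one_div]
  refine ENNReal.le_inv_one_add_of_forall_lt
    ((dimH_mono (subset_univ _)).trans Real.dimH_univ.le) fun c hc => ?_
  rw [← ENNReal.ofReal_toReal (ne_top_of_lt hc)]
  refine (dimH_mono ?_).trans (dimH_longRunSet_le hβ ENNReal.toReal_nonneg)
  exact fun x hx => ⟨hx.1, (hx.2.and_eventually (eventually_toReal_mul_le_of_lt_liminf hc)).mono
    fun n h => h.2.trans h.1⟩

theorem stmt10 (β : ℝ) (hβ : 1 < β) (φ : ℕ → ℝ) (hφ : ∀ n, 0 ≤ φ n) :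
    dimH {x ∈ Set.Ico (0:ℝ) 1 | ∃ᶠ n in Filter.atTop, φ n ≤ (ellRun β x n : ℝ)} ≤
      1 / (1 + Filter.liminf (fun n : ℕ => ENNReal.ofReal (φ n / n)) Filter.atTop) :=
  stmt10_general β hβ φ
end

section
/- Let β > 1 and suppose x ∈ [0,1) satisfies lim_{n→∞} ℓ_n(x)/n = 0. Then lim_{n→∞} (1/n) log_β(x − ω_n(x)) = −1, where ω_n(x) is the n-th convergent of the β-expansion of x. In particular this limit holds whenever x − ω_n(x) > 0 for all n and the zero-runs ℓ_n(x) are o(n). -/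
open Filter Real MeasureTheory Set

lemma bT_mem (β y : ℝ) : bT β y ∈ Set.Ico (0:ℝ) 1 := by
  have : bT β y = Int.fract (β * y) := rfl
  rw [this]
  exact ⟨Int.fract_nonneg _, Int.fract_lt_one _⟩

lemma iter_mem (β x : ℝ) (hx : x ∈ Set.Ico (0:ℝ) 1) (n : ℕ) :
    (bT β)^[n] x ∈ Set.Ico (0:ℝ) 1 := by
  cases n with
  | zero => exact hx
  | succ n => rw [Function.iterate_succ_apply']; exact bT_mem β _

lemma key_eq (β x : ℝ) (hβ : 0 < β) (n : ℕ) :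
    x - bConv β x n = (bT β)^[n] x / β ^ n := by
  induction n with
  | zero => simp [bConv]
  | succ n ih =>
    have hstep : (bT β)^[n+1] x = β * (bT β)^[n] x - (bDigit β x n : ℝ) := by
      rw [Function.iterate_succ_apply']
      simp [bT, bDigit]
    have hb : β ^ n ≠ 0 := pow_ne_zero _ hβ.ne'
    have hb1 : β ^ (n+1) ≠ 0 := pow_ne_zero _ hβ.ne'
    rw [bConv, Finset.sum_range_succ, ← bConv, hstep]
    have := ih
    field_simp at this ⊢
    ring_nf
    ring_nf at this
    nlinarith [this]

lemma zero_run (β x : ℝ) (n : ℕ) :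
    ∀ k : ℕ, (∀ j < k, bDigit β x (n + j) = 0) →
      (bT β)^[n + k] x = β ^ k * (bT β)^[n] x := by
  intro k
  induction k with
  | zero => simp
  | succ k ih =>
    intro h
    have h1 := ih (fun j hj => h j (hj.trans (Nat.lt_succ_self k)))
    have hd : bDigit β x (n + k) = 0 := h k (Nat.lt_succ_self k)
    unfold bDigit at hd
    have heq : n + (k + 1) = (n + k) + 1 := rfl
    rw [heq, Function.iterate_succ_apply']
    simp only [bT]
    rw [h1] at hd ⊢
    rw [hd]
    push_cast
    ring

lemma digit_nonneg (β x : ℝ) (hβ : 0 < β) (hx : x ∈ Set.Ico (0:ℝ) 1) (k : ℕ) :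
    0 ≤ bDigit β x k := by
  apply Int.floor_nonneg.mpr
  exact mul_nonneg hβ.le (iter_mem β x hx k).1

lemma sandwich (β x : ℝ) (hβ : 1 < β) (hx : x ∈ Set.Ico (0:ℝ) 1)
    (hpos : ∀ n : ℕ, bConv β x n < x) (n : ℕ) :
    1 / β ^ (n + ellRun β x n + 1) ≤ x - bConv β x n ∧
      x - bConv β x n ≤ 1 / β ^ n := by
  have hβ0 : (0:ℝ) < β := lt_trans one_pos hβ
  have hk := key_eq β x hβ0 n
  set y := (bT β)^[n] x with hy
  have hyo : y ∈ Set.Ico (0:ℝ) 1 := iter_mem β x hx n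
  have hbn : (0:ℝ) < β ^ n := pow_pos hβ0 n
  have hy0 : 0 < y := by
    have := hpos n
    have h2 : 0 < y / β ^ n := by rw [← hk]; linarith
    rcases div_pos_iff.mp h2 with ⟨h, _⟩ | ⟨_, h⟩
    · exact h
    · linarith
  -- set of zero-run lengths is bounded
  have hnz : ∃ m : ℕ, bDigit β x (n + m) ≠ 0 := by
    by_contra hc
    push_neg at hc
    obtain ⟨m, hm⟩ := pow_unbounded_of_one_lt (1 / y) hβ
    have hz := zero_run β x n m (fun j _ => hc j)
    have h1 : β ^ m * y < 1 := by
      have := (iter_mem β x hx (n + m)).2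
      rw [hz] at this; exact this
    rw [div_lt_iff₀ hy0] at hm
    linarith
  obtain ⟨m, hm⟩ := hnz
  set S : Set ℕ := {k : ℕ | ∀ j < k, bDigit β x (n + j) = 0} with hS
  have hbdd : BddAbove S := by
    refine ⟨m, fun k hk => ?_⟩
    by_contra hmk
    push_neg at hmk
    exact hm (hk m hmk)
  have hne : S.Nonempty := ⟨0, by simp [hS]⟩
  have hmem : ellRun β x n ∈ S := Nat.sSup_mem hne hbdd
  set ℓ := ellRun β x n with hℓ
  have hnot : ℓ + 1 ∉ S := by
    intro h
    have h2 := le_csSup hbdd h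
    have heq : sSup S = ℓ := rfl
    rw [heq] at h2
    omega
  have hdℓ : bDigit β x (n + ℓ) ≠ 0 := by
    intro h
    apply hnot
    intro j hj
    rcases Nat.lt_succ_iff_lt_or_eq.mp hj with h' | h'
    · exact hmem j h'
    · rw [h']; exact h
  have hd1 : (1:ℤ) ≤ bDigit β x (n + ℓ) :=
    lt_of_le_of_ne (digit_nonneg β x hβ0 hx _) (Ne.symm hdℓ)
  have hge : (1:ℝ) ≤ β * (bT β)^[n + ℓ] x := by
    have := Int.le_floor.mp hd1
    exact_mod_cast this
  have hz := zero_run β x n ℓ hmem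
  rw [hz] at hge
  -- so β^(ℓ+1) * y ≥ 1
  constructor
  · rw [hk]
    rw [div_le_div_iff₀ (by positivity) hbn]
    have : β ^ (n + ℓ + 1) = β ^ n * (β * β ^ ℓ) := by ring
    calc (1:ℝ) * β ^ n = β ^ n := by ring
    _ ≤ (β * (β ^ ℓ * y)) * β ^ n := by nlinarith
    _ = y * β ^ (n + ℓ + 1) := by ring
  · rw [hk, div_le_div_iff₀ hbn hbn]
    nlinarith [hyo.2]

lemma logb_one_div_pow (β : ℝ) (hβ : 1 < β) (k : ℕ) :
    Real.logb β (1 / β ^ k) = -(k : ℝ) := by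
  rw [one_div, Real.logb_inv, Real.logb_pow, Real.logb_self_eq_one hβ, mul_one]

theorem stmt15 (β x : ℝ) (hβ : 1 < β) (hx : x ∈ Set.Ico (0:ℝ) 1)
    (hpos : ∀ n : ℕ, bConv β x n < x)
    (hell : Filter.Tendsto (fun n : ℕ => (ellRun β x n : ℝ) / n) Filter.atTop (nhds 0)) :
    Filter.Tendsto (fun n : ℕ => Real.logb β (x - bConv β x n) / n)
      Filter.atTop (nhds (-1)) := by
  have hβ0 : (0:ℝ) < β := lt_trans one_pos hβ
  have hg : Tendsto (fun n : ℕ => -1 - ((ellRun β x n : ℝ) + 1) / n) atTop (nhds (-1)) := by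
    have h1 : Tendsto (fun n : ℕ => ((ellRun β x n : ℝ) + 1) / n) atTop (nhds 0) := by
      have := hell.add tendsto_one_div_atTop_nhds_zero_nat
      simp only [add_zero] at this
      refine this.congr fun n => ?_
      rw [add_div]
    have h2 := (tendsto_const_nhds (x := (-1:ℝ)) (f := atTop (α := ℕ))).sub h1
    simpa using h2
  refine tendsto_of_tendsto_of_tendsto_of_le_of_le' hg tendsto_const_nhds ?_ ?_
  · filter_upwards [eventually_ge_atTop 1] with n hn
    have hn0 : (0:ℝ) < n := by exact_mod_cast hn
    have hs := (sandwich β x hβ hx hpos n).1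
    have ht : 0 < x - bConv β x n := sub_pos.mpr (hpos n)
    have h1 : Real.logb β (1 / β ^ (n + ellRun β x n + 1)) ≤ Real.logb β (x - bConv β x n) :=
      Real.logb_le_logb_of_le hβ (by positivity) hs
    rw [logb_one_div_pow β hβ] at h1
    push_cast at h1
    rw [le_div_iff₀ hn0]
    have : (-1 - ((ellRun β x n : ℝ) + 1) / n) * n = -((n:ℝ) + ellRun β x n + 1) := by
      field_simp
      ring
    rw [this]
    linarith
  · filter_upwards [eventually_ge_atTop 1] with n hn
    have hn0 : (0:ℝ) < n := by exact_mod_cast hn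
    have hs := (sandwich β x hβ hx hpos n).2
    have ht : 0 < x - bConv β x n := sub_pos.mpr (hpos n)
    have h1 : Real.logb β (x - bConv β x n) ≤ Real.logb β (1 / β ^ n) :=
      Real.logb_le_logb_of_le hβ ht hs
    rw [logb_one_div_pow β hβ] at h1
    rw [div_le_iff₀ hn0]
    linarith
end
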